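/- Characterization of the syndrome space under connectivity: let E ⊆ E(𝓛) with Ē = E(𝓛) \ E, and suppose both E and Ē are nonempty and connected. Then the syndrome space 𝒮 = 𝒮(E) ∩ 𝒮(Ē) equals the set of all 0-chains u : V → ZMod 2 supported on ∂E with ∑_{s ∈ ∂E} u_s = 0 in ZMod 2 (the even 0-chains on ∂E), and consequently |𝒮| = 2^{|∂E| - 1}. -/

import Mathlib

open Finset

/-- Edges of the L×L square lattice: `horiz i j` is the edge from (i,j) to (i+1,j),
`vert i j` is the edge from (i,j) to (i,j+1). -/
inductive Edge (L : ℕ) where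
  | horiz : Fin L → Fin (L+1) → Edge L
  | vert  : Fin (L+1) → Fin L → Edge L
deriving DecidableEq, Fintype

/-- Vertices of the L×L square lattice. -/
abbrev Vertex (L : ℕ) := Fin (L+1) × Fin (L+1)

/-- The two endpoints of an edge. -/
def Edge.ends {L : ℕ} : Edge L → Vertex L × Vertex L
  | .horiz i j => ((i.castSucc, j), (i.succ, j))
  | .vert i j  => ((i, j.castSucc), (i, j.succ))

/-- A vertex is incident to an edge iff it is one of its endpoints. -/
def Incident {L : ℕ} (s : Vertex L) (e : Edge L) : Prop :=
  s = e.ends.1 ∨ s = e.ends.2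

instance {L : ℕ} (s : Vertex L) (e : Edge L) : Decidable (Incident s e) := by
  unfold Incident; infer_instance

/-- The star δs: the set of edges incident to a vertex s. -/
def star {L : ℕ} (s : Vertex L) : Finset (Edge L) :=
  Finset.univ.filter (fun e => Incident s e)

/-- The boundary ∂p of the plaquette p = (i,j): the four edges of the unit square
with corners (i,j), (i+1,j), (i,j+1), (i+1,j+1). -/
def pBoundary {L : ℕ} (p : Fin L × Fin L) : Finset (Edge L) :=
  {Edge.horiz p.1 p.2.castSucc, Edge.horiz p.1 p.2.succ,
   Edge.vert p.1.castSucc p.2, Edge.vert p.1.succ p.2}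


/-- The boundary of a 1-chain x : E(𝓛) → ZMod 2 is the 0-chain ∂x with
(∂x)_s = ∑_{e ∈ δs} x_e. -/
def bd {L : ℕ} (x : Edge L → ZMod 2) : Vertex L → ZMod 2 :=
  fun s => ∑ e ∈ star s, x e

/-- The restriction of a 1-chain to a subset E of edges, extended by zero. -/
def restrict {L : ℕ} (E : Finset (Edge L)) (x : Edge L → ZMod 2) : Edge L → ZMod 2 :=
  fun e => if e ∈ E then x e else 0

/-- ∂E: the set of vertices incident both to an edge of E and to an edge of the
complement Ē = E(𝓛) \ E. -/
def bdryV {L : ℕ} (E : Finset (Edge L)) : Finset (Vertex L) :=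
  Finset.univ.filter (fun s => (∃ e ∈ E, Incident s e) ∧ (∃ e ∈ Eᶜ, Incident s e))

/-- A relative 1-cycle on E with respect to a set B of vertices: a 1-chain supported on
E whose boundary vanishes outside B. `IsRelCycle E (bdryV E) x` says x ∈ 𝒵(E,∂E). -/
def IsRelCycle {L : ℕ} (E : Finset (Edge L)) (B : Finset (Vertex L))
    (x : Edge L → ZMod 2) : Prop :=
  (∀ e ∉ E, x e = 0) ∧ ∀ s ∉ B, bd x s = 0

/-- Two edges share a vertex. -/
def SharesVertex {L : ℕ} (e e' : Edge L) : Prop :=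
  ∃ s : Vertex L, Incident s e ∧ Incident s e'

/-- A set E of edges is connected iff any two of its edges are joined by a path of
edges of E in which consecutive edges share a vertex. -/
def EdgeConnected {L : ℕ} (E : Finset (Edge L)) : Prop :=
  ∀ e ∈ E, ∀ e' ∈ E, ∃ (n : ℕ) (c : Fin (n + 1) → Edge L),
    c 0 = e ∧ c (Fin.last n) = e' ∧ (∀ i, c i ∈ E) ∧
    ∀ i : Fin n, SharesVertex (c i.castSucc) (c i.succ)

/-- The syndrome space 𝒮(E): the set of boundaries of relative 1-cycles in 𝒵(E,∂E). -/
def syndromes {L : ℕ} (E : Finset (Edge L)) : Set (Vertex L → ZMod 2) :=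
  {u | ∃ z : Edge L → ZMod 2, IsRelCycle E (bdryV E) z ∧ bd z = u}

-- ==== auxiliaries ====
variable {L : ℕ}

def delta (s : Vertex L) : Vertex L → ZMod 2 := fun v => if v = s then 1 else 0

lemma Edge.ends_ne (e : Edge L) : e.ends.1 ≠ e.ends.2 := by
  cases e with
  | horiz i j =>
      simp only [Edge.ends, Ne, Prod.mk.injEq, not_and]
      intro h; exact absurd h (Fin.castSucc_lt_succ : i.castSucc < i.succ).ne
  | vert i j =>
      simp only [Edge.ends, Ne, Prod.mk.injEq, not_and]
      intro _ h; exact absurd h (Fin.castSucc_lt_succ : j.castSucc < j.succ).ne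

lemma bd_add (x y : Edge L → ZMod 2) : bd (x + y) = bd x + bd y := by
  funext s; simp [bd, Finset.sum_add_distrib]

lemma bd_indicator (e : Edge L) :
    bd (fun e' => if e' = e then (1 : ZMod 2) else 0)
      = delta e.ends.1 + delta e.ends.2 := by
  funext s
  have h1 : bd (fun e' => if e' = e then (1 : ZMod 2) else 0) s
      = if e ∈ _root_.star s then 1 else 0 := by
    simp [bd]
  rw [h1]
  have h2 : e ∈ _root_.star s ↔ Incident s e := by
    simp [_root_.star]
  simp only [Pi.add_apply, delta]
  by_cases hs1 : s = e.ends.1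
  · by_cases hs2 : s = e.ends.2
    · exact absurd (hs1 ▸ hs2 ▸ rfl : e.ends.1 = e.ends.2) (Edge.ends_ne e)
    · rw [if_pos (h2.mpr (Or.inl hs1)), if_pos hs1, if_neg hs2, add_zero]
  · by_cases hs2 : s = e.ends.2
    · rw [if_pos (h2.mpr (Or.inr hs2)), if_neg hs1, if_pos hs2, zero_add]
    · rw [if_neg (fun h => (h2.mp h).elim hs1 hs2), if_neg hs1, if_neg hs2, add_zero]

def Conn (F : Finset (Edge L)) (s t : Vertex L) : Prop :=
  ∃ z : Edge L → ZMod 2, (∀ e ∉ F, z e = 0) ∧ bd z = delta s + delta t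

lemma conn_refl (F : Finset (Edge L)) (s : Vertex L) : Conn F s s := by
  refine ⟨0, fun _ _ => rfl, ?_⟩
  funext v
  simp [bd, delta, CharTwo.add_self_eq_zero]

lemma conn_symm {F : Finset (Edge L)} {s t : Vertex L} (h : Conn F s t) : Conn F t s := by
  obtain ⟨z, h1, h2⟩ := h
  exact ⟨z, h1, by rw [h2, add_comm]⟩

lemma conn_trans {F : Finset (Edge L)} {s t r : Vertex L}
    (h : Conn F s t) (h' : Conn F t r) : Conn F s r := by
  obtain ⟨z, h1, h2⟩ := h
  obtain ⟨z', h1', h2'⟩ := h'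
  refine ⟨z + z', fun e he => by simp [h1 e he, h1' e he], ?_⟩
  rw [bd_add, h2, h2']
  funext v
  simp only [Pi.add_apply]
  linear_combination (CharTwo.add_self_eq_zero (delta t v) : _)

lemma conn_edge' {F : Finset (Edge L)} {e : Edge L} (he : e ∈ F) :
    Conn F e.ends.1 e.ends.2 :=
  ⟨fun e' => if e' = e then 1 else 0,
   fun e' he' => if_neg (fun h => he' (by rw [h]; exact he)), bd_indicator e⟩

lemma conn_edge {F : Finset (Edge L)} {e : Edge L} {s t : Vertex L}
    (he : e ∈ F) (hs : Incident s e) (ht : Incident t e) : Conn F s t := by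
  rcases hs with hs | hs <;> rcases ht with ht | ht <;> subst hs <;> subst ht
  · exact conn_refl F _
  · exact conn_edge' he
  · exact conn_symm (conn_edge' he)
  · exact conn_refl F _

lemma conn_path (F : Finset (Edge L)) :
    ∀ (n : ℕ) (c : Fin (n+1) → Edge L), (∀ i, c i ∈ F) →
    (∀ i : Fin n, SharesVertex (c i.castSucc) (c i.succ)) →
    Conn F (c 0).ends.1 (c (Fin.last n)).ends.1 := by
  intro n
  induction n with
  | zero => intro c _ _; exact conn_refl F _
  | succ n ih =>
      intro c hc hs
      have h1 : Conn F (c 0).ends.1 (c ((Fin.last n).castSucc)).ends.1 := by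
        have h := ih (fun i => c i.castSucc) (fun i => hc _)
          (fun i => by
            have := hs i.castSucc
            simp only [Fin.succ_castSucc] at this ⊢
            exact this)
        simp only [Fin.castSucc_zero] at h
        exact h
      obtain ⟨w, hw1, hw2⟩ := hs (Fin.last n)
      have h2 : Conn F (c ((Fin.last n).castSucc)).ends.1 w :=
        conn_edge (hc _) (Or.inl rfl) hw1
      have h3 : Conn F w (c ((Fin.last n).succ)).ends.1 :=
        conn_edge (hc _) hw2 (Or.inl rfl)
      have hls : (Fin.last n).succ = Fin.last (n+1) := Fin.succ_last n
      rw [hls] at h3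
      exact conn_trans h1 (conn_trans h2 h3)

lemma conn_of_incident {F : Finset (Edge L)} (hF : EdgeConnected F)
    {e e' : Edge L} {s t : Vertex L}
    (he : e ∈ F) (he' : e' ∈ F) (hs : Incident s e) (ht : Incident t e') :
    Conn F s t := by
  obtain ⟨n, c, hc0, hcl, hcm, hshare⟩ := hF e he e' he'
  have hpath := conn_path F n c hcm hshare
  rw [hc0, hcl] at hpath
  exact conn_trans (conn_edge he hs (Or.inl rfl))
    (conn_trans hpath (conn_edge he' (Or.inl rfl) ht))

lemma bd_sum {ι : Type*} (t : Finset ι) (f : ι → Edge L → ZMod 2) :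
    bd (∑ i ∈ t, f i) = ∑ i ∈ t, bd (f i) := by
  funext s
  simp only [bd, Finset.sum_apply]
  exact Finset.sum_comm

lemma zmod2_eq_one {a : ZMod 2} (h : a ≠ 0) : a = 1 := by
  revert h; revert a; decide

lemma mem_syndromes_of (F : Finset (Edge L)) (hF : EdgeConnected F) (hFne : F.Nonempty)
    (u : Vertex L → ZMod 2) (hsupp : ∀ s ∉ bdryV F, u s = 0)
    (hsum : ∑ s ∈ bdryV F, u s = 0) : u ∈ syndromes F := by
  classical
  obtain ⟨e₀, he₀⟩ := hFne
  set t₀ := e₀.ends.1 with ht₀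
  set T := (bdryV F).filter (fun s => u s ≠ 0) with hT
  have hconn : ∀ s ∈ T, Conn F s t₀ := by
    intro s hsT
    have hsB : s ∈ bdryV F := (mem_filter.mp hsT).1
    obtain ⟨⟨e, heF, hse⟩, -⟩ := (mem_filter.mp hsB).2
    exact conn_of_incident hF heF he₀ hse (Or.inl rfl)
  choose z hz1 hz2 using hconn
  have hcard : (T.card : ZMod 2) = 0 := by
    have h0 : ∑ s ∈ T, u s = ∑ s ∈ bdryV F, u s :=
      Finset.sum_filter_of_ne (fun x _ h => h)
    calc (T.card : ZMod 2) = ∑ _s ∈ T, 1 := by simp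
      _ = ∑ s ∈ T, u s := sum_congr rfl (fun s hs =>
            (zmod2_eq_one (mem_filter.mp hs).2).symm)
      _ = ∑ s ∈ bdryV F, u s := h0
      _ = 0 := hsum
  set Z : Edge L → ZMod 2 := ∑ s ∈ T.attach, z s.1 s.2 with hZ
  have hZsupp : ∀ e ∉ F, Z e = 0 := by
    intro e he
    rw [hZ, Finset.sum_apply]
    exact Finset.sum_eq_zero (fun s _ => hz1 s.1 s.2 e he)
  have hbdZ : bd Z = u := by
    rw [hZ, bd_sum]
    funext v
    rw [Finset.sum_apply]
    have hc : ∀ s ∈ T.attach, bd (z s.1 s.2) v = delta s.1 v + delta t₀ v := by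
      intro s _; rw [hz2 s.1 s.2]; rfl
    rw [Finset.sum_congr rfl hc, Finset.sum_add_distrib]
    have e1 : ∑ s ∈ T.attach, delta s.1 v = ∑ s ∈ T, delta s v :=
      Finset.sum_attach T (fun x => delta x v)
    have e2 : ∑ _s ∈ T.attach, delta t₀ v = (T.card : ZMod 2) * delta t₀ v := by
      rw [Finset.sum_const, Finset.card_attach, nsmul_eq_mul]
    rw [e1, e2, hcard, zero_mul, add_zero]
    have e3 : ∑ s ∈ T, delta s v = if v ∈ T then 1 else 0 := by
      simp only [delta]
      rw [Finset.sum_ite_eq T v (fun _ => (1 : ZMod 2))]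
    rw [e3]
    by_cases hv : v ∈ T
    · rw [if_pos hv]
      exact (zmod2_eq_one (mem_filter.mp hv).2).symm
    · rw [if_neg hv]
      by_cases hvB : v ∈ bdryV F
      · by_contra h
        exact hv (mem_filter.mpr ⟨hvB, fun h0 => h h0.symm⟩)
      · exact (hsupp v hvB).symm
  exact ⟨Z, ⟨hZsupp, fun s hs => by rw [hbdZ]; exact hsupp s hs⟩, hbdZ⟩

lemma card_incident (e : Edge L) :
    (Finset.univ.filter (fun s => Incident s e)).card = 2 := by
  have h : Finset.univ.filter (fun s => Incident s e) = {e.ends.1, e.ends.2} := by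
    ext s; rw [Finset.mem_filter]; simp [Incident]
  rw [h, Finset.card_pair (Edge.ends_ne e)]

lemma sum_syndrome_zero {F : Finset (Edge L)} {u : Vertex L → ZMod 2}
    (h : u ∈ syndromes F) : ∑ s ∈ bdryV F, u s = 0 := by
  obtain ⟨z, ⟨_, hz2⟩, hbd⟩ := h
  have h1 : ∑ s ∈ bdryV F, u s = ∑ s : Vertex L, u s := by
    refine Finset.sum_subset (Finset.subset_univ _) ?_
    intro s _ hs
    rw [← hbd]; exact hz2 s hs
  rw [h1, ← hbd]
  have h2 : ∀ s : Vertex L, bd z s = ∑ e : Edge L, if Incident s e then z e else 0 := by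
    intro s
    simp only [bd, _root_.star]
    rw [Finset.sum_filter]
  rw [Finset.sum_congr rfl (fun s _ => h2 s), Finset.sum_comm]
  refine Finset.sum_eq_zero (fun e _ => ?_)
  rw [← Finset.sum_filter, Finset.sum_const, card_incident]
  simp [two_smul, CharTwo.add_self_eq_zero]

lemma bdryV_compl (E : Finset (Edge L)) : bdryV Eᶜ = bdryV E := by
  ext s; simp [bdryV, and_comm]

lemma card_even_chains (B : Finset (Vertex L)) :
    Nat.card {u : Vertex L → ZMod 2 | (∀ s ∉ B, u s = 0) ∧ ∑ s ∈ B, u s = 0}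
      = 2 ^ (B.card - 1) := by
  classical
  rcases B.eq_empty_or_nonempty with hB | ⟨b₀, hb₀⟩
  · subst hB
    have hset : {u : Vertex L → ZMod 2 | (∀ s ∉ (∅ : Finset (Vertex L)), u s = 0)
        ∧ ∑ s ∈ (∅ : Finset (Vertex L)), u s = 0} = {0} := by
      ext u
      constructor
      · rintro ⟨h1, -⟩
        have : u = 0 := funext fun s => h1 s (Finset.notMem_empty s)
        simpa using this
      · intro h
        simp only [Set.mem_singleton_iff] at h
        subst h
        exact ⟨fun s _ => rfl, by simp⟩
    rw [hset]
    simp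
  · set D := B.erase b₀ with hD
    have hb₀D : b₀ ∉ D := Finset.notMem_erase b₀ B
    have key : {u : Vertex L → ZMod 2 | (∀ s ∉ B, u s = 0) ∧ ∑ s ∈ B, u s = 0}
        ≃ ({x // x ∈ D} → ZMod 2) := by
      refine
        { toFun := fun u s => u.1 s.1
          invFun := fun v => ⟨fun s => if h : s ∈ D then v ⟨s, h⟩
              else if s = b₀ then ∑ t ∈ D.attach, v t else 0, ?_, ?_⟩
          left_inv := ?_
          right_inv := ?_ }
      · intro s hs
        have h1 : s ∉ D := fun h => hs (mem_of_mem_erase h)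
        have h2 : s ≠ b₀ := fun h => hs (h ▸ hb₀)
        simp only [dif_neg h1, if_neg h2]
      · rw [← Finset.add_sum_erase B _ hb₀, ← hD]
        rw [dif_neg hb₀D, if_pos rfl]
        have hsum2 : ∑ s ∈ D, (if h : s ∈ D then v ⟨s, h⟩
            else if s = b₀ then ∑ t ∈ D.attach, v t else 0) = ∑ t ∈ D.attach, v t := by
          rw [← Finset.sum_attach D
            (fun s => if h : s ∈ D then v ⟨s, h⟩ else if s = b₀ then ∑ t ∈ D.attach, v t else 0)]
          refine Finset.sum_congr rfl (fun s _ => ?_)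
          rw [dif_pos s.2]
        rw [hsum2]
        exact CharTwo.add_self_eq_zero _
      · rintro ⟨u, hu1, hu2⟩
        refine Subtype.ext (funext fun s => ?_)
        show (if h : s ∈ D then u s else if s = b₀ then ∑ t ∈ D.attach, u t.1 else 0) = u s
        by_cases hsD : s ∈ D
        · simp only [dif_pos hsD]
        · rw [dif_neg hsD]
          by_cases hsb : s = b₀
          · subst hsb
            rw [if_pos rfl]
            have hsplit : u s + ∑ t ∈ D, u t = 0 := by
              rw [hD, Finset.add_sum_erase B u hb₀]; exact hu2
            have hAtt : ∑ t ∈ D.attach, u t.1 = ∑ t ∈ D, u t :=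
              Finset.sum_attach D (fun x => u x)
            rw [hAtt]
            calc ∑ t ∈ D, u t = u s + (u s + ∑ t ∈ D, u t) := by
                  rw [← add_assoc, CharTwo.add_self_eq_zero, zero_add]
              _ = u s := by rw [hsplit, add_zero]
          · rw [if_neg hsb]
            exact (hu1 s (fun hsB => hsD (Finset.mem_erase.mpr ⟨hsb, hsB⟩))).symm
      · intro v
        funext s
        show (if h : s.1 ∈ D then v ⟨s.1, h⟩ else if s.1 = b₀ then ∑ t ∈ D.attach, v t else 0)
          = v s
        rw [dif_pos s.2]
    rw [Nat.card_congr key, Nat.card_eq_fintype_card, Fintype.card_fun, ZMod.card,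
      Fintype.card_coe, hD, Finset.card_erase_of_mem hb₀]

/-- if E and Ē = E(𝓛) \ E are both nonempty and connected, then the
common syndrome space 𝒮 = 𝒮(E) ∩ 𝒮(Ē) is exactly the set of 0-chains supported on ∂E
with even total sum, and consequently |𝒮| = 2^{|∂E| - 1}. -/
theorem syndrome_space_characterization (L : ℕ) (hL : 1 ≤ L)
    (E : Finset (Edge L)) (hne : E.Nonempty) (hnec : Eᶜ.Nonempty)
    (hE : EdgeConnected E) (hEc : EdgeConnected Eᶜ) :
    (syndromes E ∩ syndromes Eᶜ) =
      {u : Vertex L → ZMod 2 |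
        (∀ s ∉ bdryV E, u s = 0) ∧ ∑ s ∈ bdryV E, u s = 0} ∧
    Nat.card (syndromes E ∩ syndromes Eᶜ : Set (Vertex L → ZMod 2))
      = 2 ^ ((bdryV E).card - 1) := by
  have hset : (syndromes E ∩ syndromes Eᶜ) =
      {u : Vertex L → ZMod 2 |
        (∀ s ∉ bdryV E, u s = 0) ∧ ∑ s ∈ bdryV E, u s = 0} := by
    ext u
    constructor
    · rintro ⟨hu, -⟩
      have hsum := sum_syndrome_zero hu
      obtain ⟨z, ⟨-, hz2⟩, hbd⟩ := hu
      exact ⟨fun s hs => by rw [← hbd]; exact hz2 s hs, hsum⟩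
    · rintro ⟨hsupp, hsum⟩
      exact ⟨mem_syndromes_of E hE hne u hsupp hsum,
        mem_syndromes_of Eᶜ hEc hnec u
          (by rw [bdryV_compl]; exact hsupp) (by rw [bdryV_compl]; exact hsum)⟩
  exact ⟨hset, by rw [hset]; exact card_even_chains (bdryV E)⟩
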